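/- Let d = (d_1,...,d_n) be a non-increasing sequence of positive integers with d_1 ≥ 2 and ∑ d_i = 2n - 2c for a positive integer c. If n_1(d) > n_{≥2}(d) and c - 1 ≥ ⌈(n_1(d) - n_{≥2}(d))/2⌉, then the maximum of the domination number over all forests with degree sequence d equals ⌊n/2⌋. -/

import Mathlib

open SimpleGraph Finset

/-- The degree of a vertex `v` in a simple graph `G`. -/
noncomputable def deg {V : Type*} [Fintype V] (G : SimpleGraph V) (v : V) : ℕ :=
  Nat.card {u // G.Adj v u}

/-- The degree sequence of `G` as a multiset. -/
noncomputable def degSeq {V : Type*} [Fintype V] (G : SimpleGraph V) : Multiset ℕ :=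
  Finset.univ.val.map (deg G)

/-- `D` is a dominating set of `G`. -/
def IsDomSet {V : Type*} (G : SimpleGraph V) (D : Set V) : Prop :=
  ∀ v ∉ D, ∃ u ∈ D, G.Adj u v

/-- The domination number of `G`. -/
noncomputable def domNum {V : Type*} [Fintype V] (G : SimpleGraph V) : ℕ :=
  sInf {k | ∃ D : Set V, IsDomSet G D ∧ D.ncard = k}

/-- `I` is an independent set of `G`. -/
def IsIndepSet' {V : Type*} (G : SimpleGraph V) (I : Set V) : Prop :=
  ∀ u ∈ I, ∀ v ∈ I, ¬ G.Adj u v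

/-- The independence number of `G`. -/
noncomputable def indepNum {V : Type*} [Fintype V] (G : SimpleGraph V) : ℕ :=
  sSup {k | ∃ I : Set V, IsIndepSet' G I ∧ I.ncard = k}

/-- `v` is a support vertex of `G`: degree at least 2 with a neighbor of degree 1. -/
noncomputable def IsSupport {V : Type*} [Fintype V] (G : SimpleGraph V) (v : V) : Prop :=
  2 ≤ deg G v ∧ ∃ u, G.Adj v u ∧ deg G u = 1

/-!
Upper bound (Ore): in a graph without isolated vertices a maximal independent set and its
complement both dominate, so `γ ≤ n / 2`.

Lower bound: let `M = n / 2`, let `B` be the number of entries `≥ 2`, and let `ρ = n - 2M`.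
The hypothesis on `c` says that the sequence `d_j - 1` on the first `M` positions, with `ρ`
more taken off `d_{B-1}`, is the degree sequence of a forest with `c` components; such a
forest is built greedily, hanging the last vertex (a leaf) on the last vertex of maximum degree.
Giving each of these `M` vertices a pendant leaf, and hanging the odd vertex (if any) on
vertex `B - 1`, yields a forest with degree sequence `d` in which the `M` pendant leaves have
pairwise disjoint closed neighbourhoods, so `γ ≥ M`.
-/

theorem SimpleGraph.isAcyclic_of_subsingleton_lt {V : Type*} [LinearOrder V] {G : SimpleGraph V}
    (h : ∀ v, {u | G.Adj v u ∧ u < v}.Subsingleton) : G.IsAcyclic := by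
  -- both cycle neighbours of the largest vertex `m` of a cycle are smaller than `m`
  intro v c hc
  set m := c.support.toFinset.max' ⟨v, by simp⟩
  have hm : m ∈ c.support := by simpa using c.support.toFinset.max'_mem _
  have hc' := hc.rotate hm
  have hnil := hc'.not_nil
  have lt_m : ∀ x ∈ (c.rotate m hm).support, G.Adj m x → x < m := fun x hx hadj =>
    lt_of_le_of_ne (c.support.toFinset.le_max' x (by simpa using hx)) hadj.ne'
  refine hc'.snd_ne_penultimate (h m ⟨Walk.adj_snd hnil, lt_m _ ?_ (Walk.adj_snd hnil)⟩
    ⟨(Walk.adj_penultimate hnil).symm, lt_m _ ?_ (Walk.adj_penultimate hnil).symm⟩)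
  · exact Walk.getVert_mem_support _ _
  · exact Walk.getVert_mem_support _ _

/-- A forest on `Fin n` is encoded by a parent map: `q j = some i` is an edge from `j` to an
earlier vertex `i`, and `parentDeg q m j` is the degree of `j` when the vertices are `< m`. -/
def IsParentMap (q : ℕ → Option ℕ) : Prop :=
  ∀ j i, q j = some i → i < j

def parentGraph (n : ℕ) (q : ℕ → Option ℕ) : SimpleGraph (Fin n) :=
  SimpleGraph.fromRel fun a b => q a = some (b : ℕ)

def parentDeg (q : ℕ → Option ℕ) (m j : ℕ) : ℕ :=
  (if (q j).isSome then 1 else 0) + ∑ i ∈ range m, if q i = some j then 1 else 0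

namespace IsParentMap

variable {q : ℕ → Option ℕ}

theorem parentGraph_adj (hq : IsParentMap q) {n : ℕ} {a b : Fin n} :
    (parentGraph n q).Adj a b ↔ q a = some (b : ℕ) ∨ q b = some (a : ℕ) := by
  refine ⟨And.right, fun h => ⟨fun hab => ?_, h⟩⟩
  subst hab
  exact h.elim (fun h => (hq _ _ h).false) (fun h => (hq _ _ h).false)

theorem isAcyclic_parentGraph (hq : IsParentMap q) (n : ℕ) : (parentGraph n q).IsAcyclic := by
  refine isAcyclic_of_subsingleton_lt fun a b hb c hc => ?_
  have parent : ∀ {x : Fin n}, (parentGraph n q).Adj a x ∧ x < a → q a = some (x : ℕ) := by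
    rintro x ⟨hadj, hlt⟩
    refine ((hq.parentGraph_adj).mp hadj).resolve_right fun h => ?_
    exact absurd (hq _ _ h) (not_lt.mpr (Fin.le_def.mp hlt.le))
  exact Fin.ext (Option.some_injective _ ((parent hb).symm.trans (parent hc)))

theorem deg_parentGraph (hq : IsParentMap q) {n : ℕ} (j : Fin n) :
    deg (parentGraph n q) j = parentDeg q n j := by
  classical
  have hnot : ∀ u : Fin n, ¬ (q j = some (u : ℕ) ∧ q u = some (j : ℕ)) := fun u h =>
    lt_asymm (hq _ _ h.1) (hq _ _ h.2)
  calc deg (parentGraph n q) j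
      = ∑ u : Fin n,
          ((if q j = some (u : ℕ) then 1 else 0) + if q u = some (j : ℕ) then 1 else 0) := by
        rw [deg, Nat.card_eq_fintype_card, Fintype.card_subtype, card_filter]
        refine sum_congr rfl fun u _ => ?_
        rw [hq.parentGraph_adj]
        have := hnot u
        split_ifs <;> simp_all
    _ = parentDeg q n j := by
        rw [sum_add_distrib, Fin.sum_univ_eq_sum_range (fun i => if q j = some i then 1 else 0),
          Fin.sum_univ_eq_sum_range (fun i => if q i = some (j : ℕ) then 1 else 0), parentDeg]
        congr 1
        rcases h : q j with _ | p
        · simp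
        · have : p < n := (hq _ _ h).trans j.isLt
          simp [this]

end IsParentMap

theorem parentDeg_update_of_lt (q : ℕ → Option ℕ) (p : Option ℕ) {m j : ℕ} (hj : j < m) :
    parentDeg (Function.update q m p) (m + 1) j =
      parentDeg q m j + if p = some j then 1 else 0 := by
  simp only [parentDeg, sum_range_succ, Function.update_self, Function.update_of_ne hj.ne]
  rw [sum_congr rfl fun i hi => by rw [Function.update_of_ne (mem_range.mp hi).ne]]
  ring

theorem IsParentMap.parentDeg_update_self {q : ℕ → Option ℕ} (hq : IsParentMap q) {m : ℕ}
    {p : Option ℕ} (hp : ∀ t, p = some t → t < m) :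
    parentDeg (Function.update q m p) (m + 1) m = if p.isSome then 1 else 0 := by
  rw [parentDeg, Function.update_self, add_eq_left, sum_eq_zero_iff]
  intro i hi
  rcases eq_or_ne i m with rfl | hne
  · simpa using fun h => (hp i h).false
  · rw [Function.update_of_ne hne, if_neg fun h => ?_]
    exact absurd (hq _ _ h) (by have := mem_range.mp hi; omega)

theorem IsParentMap.update {q : ℕ → Option ℕ} (hq : IsParentMap q) {m : ℕ} {p : Option ℕ}
    (hp : ∀ t, p = some t → t < m) : IsParentMap (Function.update q m p) := by
  intro j i h
  rcases eq_or_ne j m with rfl | hne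
  · exact hp i (by simpa using h)
  · exact hq j i (by rwa [Function.update_of_ne hne] at h)

theorem IsParentMap.exists_parentDeg_eq_succ {P : ℕ → Option ℕ} (hP : IsParentMap P) {K : ℕ}
    {e e' : ℕ → ℕ}
    (hPdeg : ∀ j < K, parentDeg P K j = e' j) (p : Option ℕ) (hp : ∀ t, p = some t → t < K)
    (he : ∀ j < K, e j = e' j + if p = some j then 1 else 0)
    (hK : e K = if p.isSome then 1 else 0) :
    ∃ P', IsParentMap P' ∧ ∀ j < K + 1, parentDeg P' (K + 1) j = e j := by
  refine ⟨Function.update P K p, hP.update hp, fun j hj => ?_⟩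
  rcases Nat.lt_succ_iff_lt_or_eq.mp hj with hj | rfl
  · rw [parentDeg_update_of_lt _ _ hj, hPdeg j hj, he j hj]
  · rw [hP.parentDeg_update_self hp, hK]

theorem AntitoneOn.exists_last_max {e : ℕ → ℕ} {K : ℕ} (he : AntitoneOn e (Set.Iio K))
    (hK : 0 < K) :
    ∃ t < K, (∀ i < K, e i ≤ e t) ∧ ∀ j, t < j → j < K → e j < e t := by
  set t := Nat.findGreatest (e · = e 0) (K - 1)
  have het : e t = e 0 := Nat.findGreatest_spec (P := (e · = e 0)) (m := 0) (Nat.zero_le _) rfl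
  have hmax : ∀ i < K, e i ≤ e t := fun i hi => het ▸ he (show 0 < K from hK) hi i.zero_le
  refine ⟨t, (Nat.findGreatest_le _).trans_lt (by omega), hmax, fun j htj hj => ?_⟩
  exact lt_of_le_of_ne (hmax j hj)
    (het ▸ Nat.findGreatest_is_greatest (P := (e · = e 0)) htj (by omega))

theorem antitoneOn_update_sub_one {e : ℕ → ℕ} {K t : ℕ} (he : AntitoneOn e (Set.Iio K))
    (ht : t < K) (hgt : ∀ j, t < j → j < K → e j < e t) :
    AntitoneOn (Function.update e t (e t - 1)) (Set.Iio K) := by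
  intro i hi j hj hij
  simp only [Set.mem_Iio] at hi hj
  have hji := he hi hj hij
  simp only [Function.update_apply]
  split_ifs with hjt hit
  · omega
  · have := he hi ht (hjt ▸ hij); omega
  · have := hgt j (by omega) hj; omega
  · omega

theorem card_filter_update_sub_one_eq_zero {e : ℕ → ℕ} {K k t : ℕ}
    (hpos : ∀ i < K, 1 ≤ e i) (hmax : ∀ i < K, e i ≤ e t) (hk : 1 ≤ k)
    (hsum : ∑ i ∈ range K, e i + 2 * k = 2 * K + 1) :
    #{i ∈ range K | Function.update e t (e t - 1) i = 0} < k ∨ k = K := by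
  by_cases h1 : e t = 1
  · have hsub : {i ∈ range K | Function.update e t (e t - 1) i = 0} ⊆ {t} := fun i hi => by
      rw [mem_filter, mem_range] at hi
      rw [mem_singleton]
      by_contra hit
      rw [Function.update_of_ne hit] at hi
      have := hpos i hi.1
      omega
    have hcard := card_le_card hsub
    have : ∑ i ∈ range K, e i = K := by
      rw [sum_congr rfl fun i hi => le_antisymm (h1 ▸ hmax i (mem_range.mp hi))
        (hpos i (mem_range.mp hi))]
      simp
    rw [card_singleton] at hcard
    omega
  · left
    rw [filter_false_of_mem fun i hi => ?_, card_empty]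
    · exact hk
    · have := hpos i (mem_range.mp hi)
      rw [Function.update_apply]
      split_ifs with hit
      · subst hit; omega
      · omega

theorem exists_parentMap_parentDeg_eq (K k : ℕ) (e : ℕ → ℕ) (he : AntitoneOn e (Set.Iio K))
    (hsum : ∑ i ∈ range K, e i + 2 * k = 2 * K)
    (hzero : #{i ∈ range K | e i = 0} < k ∨ k = K) :
    ∃ P, IsParentMap P ∧ ∀ j < K, parentDeg P K j = e j := by
  induction K generalizing e k with
  | zero =>
    exact ⟨fun _ => none, fun _ _ h => by simp at h, fun _ h => absurd h (Nat.not_lt_zero _)⟩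
  | succ K ih =>
    rw [sum_range_succ] at hsum
    have he' : AntitoneOn e (Set.Iio K) := he.mono (Set.Iio_subset_Iio K.le_succ)
    have heK : ∀ i ≤ K, e K ≤ e i := fun i hi =>
      he (show i < K + 1 by omega) K.lt_succ_self hi
    by_cases hK0 : e K = 0
    · rw [range_add_one, filter_insert, if_pos hK0, card_insert_of_notMem (by simp)] at hzero
      obtain ⟨P, hP, hPdeg⟩ := ih (k - 1) e he' (by omega) (by omega)
      exact hP.exists_parentDeg_eq_succ hPdeg none (by simp) (by simp) (by simp [hK0])
    · -- the last vertex is a leaf; hanging it on the last vertex of maximum degree keeps the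
      -- remaining sequence non-increasing
      have hpos : ∀ i ≤ K, 1 ≤ e i := fun i hi => (heK i hi).trans' (by omega)
      have hk : 1 ≤ k := by rcases hzero with h | h <;> omega
      have heK1 : e K = 1 := by
        by_contra h
        have : ∑ i ∈ range K, 2 ≤ ∑ i ∈ range K, e i := sum_le_sum fun i hi =>
          (show 2 ≤ e K by omega).trans (heK i (mem_range.mp hi).le)
        rw [sum_const, card_range, smul_eq_mul] at this
        omega
      have hK : 1 ≤ K := by
        rcases K with _ | K
        · rw [range_zero, sum_empty] at hsum; omega
        · omega
      obtain ⟨t, ht, hmax, hgt⟩ := he'.exists_last_max hK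
      have hsum' :
          ∑ i ∈ range K, Function.update e t (e t - 1) i + 1 = ∑ i ∈ range K, e i := by
        have ht' : t ∈ range K := mem_range.mpr ht
        rw [sum_update_of_mem ht', sum_eq_add_sum_sdiff_singleton_of_mem ht' e]
        have := hpos t ht.le
        omega
      obtain ⟨P, hP, hPdeg⟩ := ih k _ (antitoneOn_update_sub_one he' ht hgt) (by omega)
        (card_filter_update_sub_one_eq_zero (fun i hi => hpos i hi.le) hmax hk (by omega))
      refine hP.exists_parentDeg_eq_succ hPdeg (some t) (by simpa using ht) (fun j hj => ?_)
        (by simp [heK1])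
      have := hpos j hj.le
      simp only [Function.update_apply, Option.some_inj]
      split_ifs with h <;> subst_vars <;> omega

section Domination

variable {V : Type*} {G : SimpleGraph V}

theorem domNum_le_ncard [Fintype V] {D : Set V} (hD : IsDomSet G D) : domNum G ≤ D.ncard :=
  Nat.sInf_le ⟨D, hD, rfl⟩

theorem isDomSet_of_maximal_isIndepSet {I : Set V} (hI : Maximal G.IsIndepSet I) :
    IsDomSet G I := by
  intro v hv
  by_contra! hnadj
  refine hv (hI.mem_of_prop_insert (hI.prop.insert fun u hu _ => ⟨?_, hnadj u hu⟩))
  exact fun h => hnadj u hu h.symm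

theorem isDomSet_compl_of_isIndepSet {I : Set V} (hI : G.IsIndepSet I)
    (hG : ∀ v, ∃ u, G.Adj v u) : IsDomSet G Iᶜ := by
  intro v hv
  obtain ⟨u, hu⟩ := hG v
  exact ⟨u, fun huI => hI (not_not.mp hv) huI hu.ne hu, hu.symm⟩

theorem domNum_le_card_div_two [Fintype V] (hG : ∀ v, ∃ u, G.Adj v u) :
    domNum G ≤ Fintype.card V / 2 := by
  obtain ⟨I, hI⟩ := (Set.toFinite {s : Set V | G.IsIndepSet s}).exists_maximal
    ⟨∅, Set.pairwise_empty _⟩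
  have hI' : Maximal G.IsIndepSet I := hI
  have h₁ := domNum_le_ncard (isDomSet_of_maximal_isIndepSet hI')
  have h₂ := domNum_le_ncard (isDomSet_compl_of_isIndepSet hI'.prop hG)
  have := Set.ncard_add_ncard_compl I
  rw [Nat.card_eq_fintype_card] at this
  omega

theorem card_le_domNum [Fintype V] {ι : Type*} [Fintype ι] (S : ι → Set V) (v : ι → V)
    (hv : ∀ i, v i ∈ S i) (hS : ∀ i u, G.Adj (v i) u → u ∈ S i)
    (hdisj : Pairwise fun i j => Disjoint (S i) (S j)) : Fintype.card ι ≤ domNum G := by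
  refine le_csInf ⟨_, Set.univ, fun u hu => absurd (Set.mem_univ u) hu, rfl⟩ ?_
  rintro _ ⟨D, hD, rfl⟩
  have hpick : ∀ i, ∃ x ∈ D, x ∈ S i := fun i => by
    by_cases hvD : v i ∈ D
    · exact ⟨v i, hvD, hv i⟩
    · obtain ⟨u, huD, hu⟩ := hD (v i) hvD
      exact ⟨u, huD, hS i u hu.symm⟩
  choose f hfD hfS using hpick
  have hinj : Function.Injective fun i => (⟨f i, hfD i⟩ : D) := fun i j hij => by
    by_contra hne
    have hfij : f i = f j := congrArg Subtype.val hij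
    exact Set.disjoint_left.mp (hdisj hne) (hfS i) (hfij ▸ hfS j)
  rw [← Nat.card_eq_fintype_card, ← Nat.card_coe_set_eq]
  exact Nat.card_le_card_of_injective _ hinj

theorem eq_of_adj_of_deg_eq_one [Fintype V] {v u w : V} (h : deg G v = 1) (hu : G.Adj v u)
    (hw : G.Adj v w) : u = w := by
  have : Subsingleton {x // G.Adj v x} := (Nat.card_eq_one_iff_unique.mp h).1
  exact congrArg Subtype.val (Subsingleton.elim (⟨u, hu⟩ : {x // G.Adj v x}) ⟨w, hw⟩)

end Domination

/-- The vertices `i < M` keep their parents from `P` and receive the pendant leaf `M + i`; every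
vertex from `2 * M` on is a leaf hanging on `a`. -/
def coronaParent (M a : ℕ) (P : ℕ → Option ℕ) : ℕ → Option ℕ :=
  fun j => if j < M then P j else if j < 2 * M then some (j - M) else some a

section Corona

variable {M a : ℕ} {P : ℕ → Option ℕ}

theorem IsParentMap.coronaParent (hP : IsParentMap P) (ha : a < M) :
    IsParentMap (coronaParent M a P) := by
  intro j i h
  simp only [_root_.coronaParent] at h
  split_ifs at h with h₁ h₂
  · exact hP j i h
  · cases h; omega
  · cases h; omega

theorem sum_coronaParent_eq {n : ℕ} (hn : 2 * M ≤ n) (j : ℕ) :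
    ∑ i ∈ range n, (if coronaParent M a P i = some j then 1 else 0) =
      (∑ i ∈ range M, if P i = some j then 1 else 0) + (if j < M then 1 else 0) +
        if a = j then n - 2 * M else 0 := by
  obtain ⟨r, rfl⟩ : ∃ r, n = M + M + r := ⟨n - 2 * M, by omega⟩
  rw [sum_range_add, sum_range_add]
  congr 2
  · exact sum_congr rfl fun i hi => by simp [coronaParent, mem_range.mp hi]
  · trans ∑ i ∈ range M, if i = j then 1 else 0
    · exact sum_congr rfl fun i hi => by
        simp [coronaParent, show M + i < 2 * M by have := mem_range.mp hi; omega]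
    · simp
  · trans ∑ i ∈ range r, if a = j then 1 else 0
    · exact sum_congr rfl fun i _ => by
        simp [coronaParent, show ¬ M + M + i < M by omega, show ¬ M + M + i < 2 * M by omega]
    · rw [sum_const, card_range, smul_eq_mul]
      split_ifs <;> omega

theorem parentDeg_coronaParent_of_lt {n : ℕ} (hn : 2 * M ≤ n) {j : ℕ}
    (hj : j < M) :
    parentDeg (coronaParent M a P) n j = parentDeg P M j + 1 + if a = j then n - 2 * M else 0 := by
  rw [parentDeg, sum_coronaParent_eq hn, parentDeg, if_pos hj]
  simp only [coronaParent, if_pos hj]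
  ring

theorem parentDeg_coronaParent_of_le (hP : IsParentMap P) (ha : a < M) {n : ℕ}
    (hn : 2 * M ≤ n) {j : ℕ} (hj : M ≤ j) : parentDeg (coronaParent M a P) n j = 1 := by
  have hP0 : ∑ i ∈ range M, (if P i = some j then 1 else 0) = 0 :=
    sum_eq_zero fun i hi => if_neg fun h => by have := hP i j h; have := mem_range.mp hi; omega
  rw [parentDeg, sum_coronaParent_eq hn, hP0, if_neg (show ¬ j < M by omega),
    if_neg (show a ≠ j by omega)]
  simp only [coronaParent, if_neg (show ¬ j < M by omega)]
  split_ifs <;> simp_all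

theorem le_domNum_parentGraph_coronaParent (hP : IsParentMap P) (ha : a < M) {n : ℕ}
    (hn : 2 * M ≤ n) : M ≤ domNum (parentGraph n (coronaParent M a P)) := by
  have hq := hP.coronaParent ha
  let leaf : Fin M → Fin n := fun i => ⟨M + i, by omega⟩
  let host : Fin M → Fin n := fun i => ⟨i, by omega⟩
  have hadj : ∀ i, (parentGraph n (coronaParent M a P)).Adj (leaf i) (host i) := fun i => by
    rw [hq.parentGraph_adj]
    left
    simp [leaf, host, coronaParent, show M + (i : ℕ) < 2 * M by omega]
  have hdeg : ∀ i, deg (parentGraph n (coronaParent M a P)) (leaf i) = 1 := fun i => by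
    rw [hq.deg_parentGraph, parentDeg_coronaParent_of_le hP ha hn (by simp [leaf])]
  simpa using card_le_domNum (fun i => {leaf i, host i}) leaf (fun i => by simp)
    (fun i u hu => by simp [eq_of_adj_of_deg_eq_one (hdeg i) hu (hadj i)])
    (fun i j hij => Set.disjoint_left.mpr fun u hi hj => hij (by
      simp only [Set.mem_insert_iff, Set.mem_singleton_iff, Fin.ext_iff, leaf, host] at hi hj
      omega))

end Corona

theorem sum_range_eq_add_of_eq_one {D : ℕ → ℕ} {M n : ℕ} (hM : M ≤ n)
    (hone : ∀ j, M ≤ j → j < n → D j = 1) :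
    ∑ j ∈ range n, D j = ∑ j ∈ range M, D j + (n - M) := by
  obtain ⟨r, rfl⟩ : ∃ r, n = M + r := ⟨n - M, by omega⟩
  rw [sum_range_add,
    sum_congr rfl fun j hj => hone (M + j) (by omega) (by have := mem_range.mp hj; omega)]
  simp

/-- The degree `D j` of a vertex `j < n / 2` minus its pendant leaf and, for `j = a`, minus the
`ρ` leaves hanging on `a`. -/
def coreDeg (D : ℕ → ℕ) (a ρ j : ℕ) : ℕ :=
  D j - 1 - if a = j then ρ else 0

section CoreDeg

variable {D : ℕ → ℕ} {n B ρ : ℕ}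

theorem coreDeg_add (hB : 0 < B) (hbig : ∀ j < B, 2 ≤ D j)
    (hone : ∀ j, B ≤ j → j < n → D j = 1) (hρ : ρ ≤ 1) {j : ℕ} (hj : j < n) :
    coreDeg D (B - 1) ρ j + 1 + (if B - 1 = j then ρ else 0) = D j := by
  by_cases hjB : j < B
  · have := hbig j hjB
    simp only [coreDeg]
    split_ifs <;> omega
  · simp only [coreDeg, hone j (by omega) hj, if_neg (show B - 1 ≠ j by omega)]

theorem antitoneOn_coreDeg (hB : 0 < B) (hD : AntitoneOn D (Set.Iio B))
    (hbig : ∀ j < B, 2 ≤ D j) (hone : ∀ j, B ≤ j → j < n → D j = 1) :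
    AntitoneOn (coreDeg D (B - 1) ρ) (Set.Iio n) := by
  intro i hi j hj hij
  simp only [Set.mem_Iio] at hi hj
  simp only [coreDeg]
  by_cases hjB : j < B
  · have := hD (show i < B by omega) hjB hij
    have := hbig j hjB
    split_ifs <;> omega
  · rw [hone j (by omega) hj, if_neg (show B - 1 ≠ j by omega)]
    omega

theorem card_filter_coreDeg_eq_zero_le (hbig : ∀ j < B, 2 ≤ D j) (M : ℕ) :
    #{j ∈ range M | coreDeg D (B - 1) ρ j = 0} ≤ M - (B - ρ) := by
  have hsub : {j ∈ range M | coreDeg D (B - 1) ρ j = 0} ⊆ Ico (B - ρ) M := fun j hj => by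
    rw [mem_filter, mem_range, coreDeg] at hj
    refine mem_Ico.mpr ⟨?_, hj.1⟩
    by_contra hlt
    have := hbig j (by omega)
    have := hj.2
    split_ifs at this <;> omega
  simpa using card_le_card hsub

end CoreDeg

theorem exists_isAcyclic_deg_eq_le_domNum (n B c : ℕ) (D : ℕ → ℕ) (hB : 0 < B)
    (h2B : 2 * B ≤ n) (hD : AntitoneOn D (Set.Iio B)) (hbig : ∀ j < B, 2 ≤ D j)
    (hone : ∀ j, B ≤ j → j < n → D j = 1) (hsum : ∑ j ∈ range n, D j + 2 * c = 2 * n)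
    (hc : n - 2 * B + 2 ≤ 2 * c) :
    ∃ G : SimpleGraph (Fin n),
      G.IsAcyclic ∧ (∀ j : Fin n, deg G j = D j) ∧ n / 2 ≤ domNum G := by
  set M := n / 2
  set ρ := n - 2 * M
  have hρ : n = 2 * M + ρ ∧ ρ ≤ 1 := by omega
  have hD_eq : ∀ j < n, coreDeg D (B - 1) ρ j + 1 + (if B - 1 = j then ρ else 0) = D j :=
    fun j hj => coreDeg_add hB hbig hone hρ.2 hj
  have hcore_sum : ∑ j ∈ range M, coreDeg D (B - 1) ρ j + 2 * c = 2 * M := by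
    rw [sum_range_eq_add_of_eq_one (M := M) (by omega) fun j hj hjn => hone j (by omega) hjn,
      ← sum_congr rfl fun j hj => hD_eq j (by have := mem_range.mp hj; omega), sum_add_distrib,
      sum_add_distrib, sum_ite_eq, if_pos (mem_range.mpr (by omega))] at hsum
    simp only [sum_const, card_range, smul_eq_mul, mul_one] at hsum
    omega
  have hzero := card_filter_coreDeg_eq_zero_le (ρ := ρ) hbig M
  obtain ⟨P, hP, hPdeg⟩ := exists_parentMap_parentDeg_eq M c _
    ((antitoneOn_coreDeg hB hD hbig hone).mono (Set.Iio_subset_Iio (by omega))) hcore_sum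
    (Or.inl (by omega))
  have ha : B - 1 < M := by omega
  refine ⟨parentGraph n (coronaParent M (B - 1) P), (hP.coronaParent ha).isAcyclic_parentGraph n,
    fun j => ?_, le_domNum_parentGraph_coronaParent hP ha (by omega)⟩
  rw [(hP.coronaParent ha).deg_parentGraph]
  by_cases hj : (j : ℕ) < M
  · rw [parentDeg_coronaParent_of_lt (by omega) hj, hPdeg j hj, ← hD_eq j j.isLt]
  · rw [parentDeg_coronaParent_of_le hP ha (by omega) (by omega), hone j (by omega) j.isLt]

theorem Antitone.le_apply_iff_lt_card {α : Type*} [Preorder α] [DecidableLE α] {n : ℕ}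
    {d : Fin n → α} (hd : Antitone d) (a : α) (i : Fin n) :
    a ≤ d i ↔ (i : ℕ) < #{j | a ≤ d j} := by
  constructor
  · intro h
    have := card_le_card fun j (hj : j ∈ Iic i) => mem_filter.mpr
      ⟨mem_univ j, h.trans (hd (mem_Iic.mp hj))⟩
    rw [Fin.card_Iic] at this
    omega
  · intro h
    by_contra hi
    have := card_le_card fun j (hj : j ∈ ({j | a ≤ d j} : Finset (Fin n))) => mem_Iio.mpr
      (lt_of_not_ge fun hij => hi ((mem_filter.mp hj).2.trans (hd hij)))
    rw [Fin.card_Iio] at this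
    omega

theorem exists_adj_of_degSeq_eq {V ι : Type*} [Fintype V] [Fintype ι] {G : SimpleGraph V}
    {d : ι → ℕ} (hG : degSeq G = univ.val.map d) (hpos : ∀ i, 0 < d i) (v : V) :
    ∃ u, G.Adj v u := by
  have hmem : deg G v ∈ univ.val.map d := hG ▸ Multiset.mem_map_of_mem _ (mem_univ_val v)
  obtain ⟨i, -, hi⟩ := Multiset.mem_map.mp hmem
  obtain ⟨⟨u, hu⟩⟩ := (Nat.card_pos_iff.mp (hi ▸ hpos i : 0 < deg G v)).1
  exact ⟨u, hu⟩

theorem exists_isAcyclic_degSeq_eq_le_domNum (n c : ℕ) (d : Fin n → ℕ)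
    (hmono : Antitone d) (hpos : ∀ i, 0 < d i) (hsum : ∑ i, d i = 2 * n - 2 * c)
    (hd1 : ∀ i : Fin n, (i : ℕ) = 0 → 2 ≤ d i) (h12 : #{i | 2 ≤ d i} < #{i | d i = 1})
    (hcs : (#{i | d i = 1} - #{i | 2 ≤ d i}) ⌈/⌉ 2 ≤ c - 1) :
    ∃ G : SimpleGraph (Fin n),
      G.IsAcyclic ∧ degSeq G = univ.val.map d ∧ n / 2 ≤ domNum G := by
  set B := #{i | 2 ≤ d i}
  have hBN : B + #{i | d i = 1} = n := by
    rw [filter_congr fun i _ => show d i = 1 ↔ ¬ 2 ≤ d i by have := hpos i; omega,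
      card_filter_add_card_filter_not, card_univ, Fintype.card_fin]
  have hBi := hmono.le_apply_iff_lt_card 2
  have hn : 0 < n := by omega
  have hB : 0 < B := by have := (hBi ⟨0, hn⟩).mp (hd1 _ rfl); omega
  let D : ℕ → ℕ := fun j => if h : j < n then d ⟨j, h⟩ else 0
  have hD : ∀ i : Fin n, D i = d i := fun i => by simp [D]
  have hsumD : ∑ j ∈ range n, D j = ∑ i, d i := by
    rw [← Fin.sum_univ_eq_sum_range]
    exact sum_congr rfl fun i _ => hD i
  have hn_le : n ≤ ∑ i, d i := by
    simpa using card_nsmul_le_sum univ d 1 fun i _ => hpos i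
  have hcs' := (ceilDiv_le_iff_le_mul two_pos).mp hcs
  obtain ⟨G, hG, hdeg, hdom⟩ := exists_isAcyclic_deg_eq_le_domNum n B c D hB (by omega)
    (fun i hi j hj hij => by
      have hin : i < n := by have := Set.mem_Iio.mp hi; omega
      have hjn : j < n := by have := Set.mem_Iio.mp hj; omega
      simpa [D, hin, hjn] using hmono (show (⟨i, hin⟩ : Fin n) ≤ ⟨j, hjn⟩ from hij))
    (fun j hj => by simpa [D, show j < n by omega] using (hBi ⟨j, by omega⟩).mpr hj)
    (fun j hj hjn => by
      have := (hBi ⟨j, hjn⟩).not.mpr (Nat.not_lt.mpr hj)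
      have := hpos ⟨j, hjn⟩
      simp only [D, dif_pos hjn]
      omega)
    (by omega) (by omega)
  exact ⟨G, hG, Multiset.map_congr rfl fun j _ => (hdeg j).trans (hD j), hdom⟩

theorem stmt_10_general (n c : ℕ) (d : Fin n → ℕ) (hmono : Antitone d)
    (hpos : ∀ i, 0 < d i) (hsum : ∑ i, d i = 2 * n - 2 * c)
    (hd1 : ∀ i : Fin n, (i : ℕ) = 0 → 2 ≤ d i)
    (h12 : (Finset.univ.filter fun i => 2 ≤ d i).card < (Finset.univ.filter fun i => d i = 1).card)
    (hcs : ((Finset.univ.filter fun i => d i = 1).card - (Finset.univ.filter fun i => 2 ≤ d i).card) ⌈/⌉ 2 ≤ c - 1) :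
    IsGreatest {k | ∃ G : SimpleGraph (Fin n), G.IsAcyclic ∧
        degSeq G = Finset.univ.val.map d ∧ domNum G = k}
      (n / 2) := by
  have hle : ∀ G : SimpleGraph (Fin n), degSeq G = univ.val.map d → domNum G ≤ n / 2 :=
    fun G hG => by simpa using domNum_le_card_div_two (exists_adj_of_degSeq_eq hG hpos)
  obtain ⟨G, hG, hdeg, hdom⟩ :=
    exists_isAcyclic_degSeq_eq_le_domNum n c d hmono hpos hsum hd1 h12 hcs
  exact ⟨⟨G, hG, hdeg, le_antisymm (hle G hdeg) hdom⟩,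
    fun _ ⟨G', _, hdeg', hk⟩ => hk ▸ hle G' hdeg'⟩

theorem stmt_10 (n c : ℕ) (hc : 0 < c) (d : Fin n → ℕ) (hmono : Antitone d)
    (hpos : ∀ i, 0 < d i) (hsum : ∑ i, d i = 2 * n - 2 * c)
    (hd1 : ∀ i : Fin n, (i : ℕ) = 0 → 2 ≤ d i)
    (h12 : (Finset.univ.filter fun i => 2 ≤ d i).card < (Finset.univ.filter fun i => d i = 1).card)
    (hcs : ((Finset.univ.filter fun i => d i = 1).card - (Finset.univ.filter fun i => 2 ≤ d i).card) ⌈/⌉ 2 ≤ c - 1) :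
    IsGreatest {k | ∃ G : SimpleGraph (Fin n), G.IsAcyclic ∧
        degSeq G = Finset.univ.val.map d ∧ domNum G = k}
      (n / 2) :=
  stmt_10_general n c d hmono hpos hsum hd1 h12 hcs
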